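/- The complex of perfect joins F⁰ of any data subcomplex 𝒮 is closed under faces and degeneracies and satisfies the strong join condition (is fibrant). -/

import Mathlib

open MeasureTheory
open scoped ENNReal

variable (A : Type*) (Val : A → Type*) [∀ a, MeasurableSpace (Val a)]

/-- A data table: a finite attribute list `T : Fin n → A` together with a measure on the
product of the corresponding value spaces.  (The level `n` is the length of the list;
`n = 0` is the empty list, whose value space is a singleton.) -/
def DT : Type _ := Σ n : ℕ, Σ T : Fin n → A, Measure (∀ k, Val (T k))

/-- Face map `d_i`: delete the `i`-th attribute and marginalize the measure. -/
noncomputable def face {n : ℕ} (T : Fin (n+1) → A) (i : Fin (n+1))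
    (τ : Measure (∀ k, Val (T k))) : Measure (∀ k : Fin n, Val (T (i.succAbove k))) :=
  τ.map fun x k => x (i.succAbove k)

/-- Degeneracy map `s_i`: repeat the `i`-th attribute and push the measure forward along
the diagonal duplication (Dirac diagonal). -/
noncomputable def degen {n : ℕ} (T : Fin n → A) (i : Fin n)
    (τ : Measure (∀ k, Val (T k))) : Measure (∀ k : Fin (n+1), Val (T (i.predAbove k))) :=
  τ.map fun x k => x (i.predAbove k)

/-- Reduction (marginalization) along an attribute inclusion `ι`. -/
noncomputable def red {m n : ℕ} (T : Fin n → A) (ι : Fin m → Fin n)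
    (τ : Measure (∀ k, Val (T k))) : Measure (∀ k : Fin m, Val (T (ι k))) :=
  τ.map fun x k => x (ι k)

/-- A data subcomplex: a collection of data tables closed under the face
(marginalization) and degeneracy (diagonal) maps. -/
def IsSubcomplex (S : Set (DT A Val)) : Prop :=
  (∀ (n : ℕ) (T : Fin (n+1) → A) (τ : Measure (∀ k, Val (T k))) (i : Fin (n+1)),
      ⟨n+1, T, τ⟩ ∈ S → ⟨n, T ∘ i.succAbove, face A Val T i τ⟩ ∈ S) ∧
  (∀ (n : ℕ) (T : Fin n → A) (τ : Measure (∀ k, Val (T k))) (i : Fin n),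
      ⟨n, T, τ⟩ ∈ S → ⟨n+1, T ∘ i.predAbove, degen A Val T i τ⟩ ∈ S)

/-- The combinatorial data of a merge of two attribute inclusions
`ι01 : T₀ ↪ T₀₁`, `ι02 : T₀ ↪ T₀₂` into a common list of length `n012`: order-preserving
inclusions of the two lists whose images cover the merged index set, agree on the common
sublist, and overlap exactly in it. -/
structure MergeTop (n0 n01 n02 n012 : ℕ)
    (ι01 : Fin n0 → Fin n01) (ι02 : Fin n0 → Fin n02) : Type where
  μ01 : Fin n01 → Fin n012
  μ02 : Fin n02 → Fin n012
  mono01 : StrictMono μ01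
  mono02 : StrictMono μ02
  comm : μ01 ∘ ι01 = μ02 ∘ ι02
  cover : Set.range μ01 ∪ Set.range μ02 = Set.univ
  inter : Set.range μ01 ∩ Set.range μ02 = Set.range (μ01 ∘ ι01)

/-- The strong join condition: for every pair of member tables that are well-aligned along
a common sublist (their reductions to it agree), *every* join of them — every measure on a
merged list reducing to the two given measures — is again a member. -/
def StrongJoinCondition (S : Set (DT A Val)) : Prop :=
  ∀ {n0 n01 n02 n012 : ℕ} (ι01 : Fin n0 → Fin n01) (ι02 : Fin n0 → Fin n02),
    StrictMono ι01 → StrictMono ι02 →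
    ∀ (M : MergeTop n0 n01 n02 n012 ι01 ι02) (T012 : Fin n012 → A)
      (τ01 : Measure (∀ k : Fin n01, Val (T012 (M.μ01 k))))
      (τ02 : Measure (∀ k : Fin n02, Val (T012 (M.μ02 k)))),
      ⟨n01, T012 ∘ M.μ01, τ01⟩ ∈ S → ⟨n02, T012 ∘ M.μ02, τ02⟩ ∈ S →
      HEq (red A Val (T012 ∘ M.μ01) ι01 τ01) (red A Val (T012 ∘ M.μ02) ι02 τ02) →
      ∀ τ012 : Measure (∀ k, Val (T012 k)),
        red A Val T012 M.μ01 τ012 = τ01 → red A Val T012 M.μ02 τ012 = τ02 →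
        ⟨n012, T012, τ012⟩ ∈ S

/-- The complex of perfect joins F⁰ of a data subcomplex `S`: all tables `(T,τ)` such
that every entry of `T` is contained in some sublist `S' ↪ T` for which the reduction of
`τ` to `S'` is a member of `S`. -/
def PerfectJoins (S : Set (DT A Val)) : Set (DT A Val) :=
  {x | ∀ i : Fin x.1, ∃ (m : ℕ) (ι : Fin m → Fin x.1),
        StrictMono ι ∧ i ∈ Set.range ι ∧
        ⟨m, x.2.1 ∘ ι, red A Val x.2.1 ι x.2.2⟩ ∈ S}

/-! A table lies in `PerfectJoins S` as soon as each of its entries is covered by a sublist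
whose marginal lies in `S`. Faces and degeneracies transport such covering sublists: for a
face one first uses the face-closure of `S` to remove the deleted entry from the sublist, for
a degeneracy one lifts the sublist along a strictly monotone section of `predAbove`. A join
inherits the covering sublists of its two halves, since every entry of the merged list lies
in one of them. -/

theorem StrictMono.exists_comp_eq_of_range_subset {α β γ : Type*} [Preorder α] [LinearOrder β]
    [Preorder γ] {f : β → γ} {g : α → γ} (hf : StrictMono f) (hg : StrictMono g)
    (h : Set.range g ⊆ Set.range f) : ∃ g' : α → β, StrictMono g' ∧ f ∘ g' = g := by
  choose g' hg' using fun a => h (Set.mem_range_self a)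
  refine ⟨g', fun a b hab => hf.lt_iff_lt.mp ?_, funext hg'⟩
  simpa only [hg'] using hg hab

theorem Fin.predAbove_succ_succAbove {n : ℕ} (i j : Fin n) :
    i.predAbove (i.succ.succAbove j) = j := by
  rcases le_or_gt j i with h | h
  · rw [Fin.succAbove_succ_of_le _ _ h, Fin.predAbove_castSucc_of_le _ _ h]
  · rw [Fin.succAbove_succ_of_lt _ _ h, Fin.predAbove_succ_of_le _ _ h.le]

theorem Fin.exists_strictMono_leftInverse_predAbove {n : ℕ} (i : Fin n) (k : Fin (n + 1)) :
    ∃ σ : Fin n → Fin (n + 1), StrictMono σ ∧ Function.LeftInverse i.predAbove σ ∧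
      σ (i.predAbove k) = k := by
  by_cases hk : k = i.castSucc
  · refine ⟨i.succ.succAbove, Fin.strictMono_succAbove _, Fin.predAbove_succ_succAbove i, ?_⟩
    rw [hk, Fin.predAbove_castSucc_of_le i i le_rfl]
    exact Fin.succAbove_of_castSucc_lt _ _ Fin.castSucc_lt_succ
  · exact ⟨i.castSucc.succAbove, Fin.strictMono_succAbove _, Fin.predAbove_succAbove i,
      Fin.succAbove_predAbove hk⟩

section PerfectJoins

variable {A Val}

theorem red_red {p q r : ℕ} (T : Fin r → A) (f : Fin q → Fin r) (g : Fin p → Fin q)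
    (τ : Measure (∀ k, Val (T k))) :
    red A Val (T ∘ f) g (red A Val T f τ) = red A Val T (f ∘ g) τ :=
  Measure.map_map (measurable_pi_lambda _ fun _ => measurable_pi_apply _)
    (measurable_pi_lambda _ fun _ => measurable_pi_apply _)

def IsMemberMarginal (S : Set (DT A Val)) {m n : ℕ} (T : Fin n → A)
    (τ : Measure (∀ k, Val (T k))) (ι : Fin m → Fin n) : Prop :=
  StrictMono ι ∧ (⟨m, T ∘ ι, red A Val T ι τ⟩ : DT A Val) ∈ S

variable {S : Set (DT A Val)}

theorem mem_perfectJoins_iff {n : ℕ} {T : Fin n → A} {τ : Measure (∀ k, Val (T k))} :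
    (⟨n, T, τ⟩ : DT A Val) ∈ PerfectJoins A Val S ↔
      ∀ i, ∃ (m : ℕ) (ι : Fin m → Fin n), IsMemberMarginal S T τ ι ∧ i ∈ Set.range ι :=
  forall_congr' fun _ => exists₂_congr fun _ _ => by
    rw [IsMemberMarginal, and_right_comm, and_assoc]; rfl

theorem IsMemberMarginal.of_comp {m n q : ℕ} {T : Fin n → A} {τ : Measure (∀ k, Val (T k))}
    {f : Fin q → Fin n} {g : Fin m → Fin q} (hfg : IsMemberMarginal S T τ (f ∘ g))
    (hg : StrictMono g) : IsMemberMarginal S (T ∘ f) (red A Val T f τ) g :=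
  ⟨hg, by rw [red_red]; exact hfg.2⟩

theorem IsMemberMarginal.comp {m n q : ℕ} {T : Fin n → A} {τ : Measure (∀ k, Val (T k))}
    {f : Fin q → Fin n} {g : Fin m → Fin q} (hg : IsMemberMarginal S (T ∘ f) (red A Val T f τ) g)
    (hf : StrictMono f) : IsMemberMarginal S T τ (f ∘ g) :=
  ⟨hf.comp hg.1, by rw [← red_red]; exact hg.2⟩

theorem IsMemberMarginal.exists_notMem_range (hsub : IsSubcomplex A Val S) {m n : ℕ}
    {T : Fin n → A} {τ : Measure (∀ k, Val (T k))} {ι : Fin m → Fin n}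
    (hι : IsMemberMarginal S T τ ι) {i j : Fin n} (hj : j ∈ Set.range ι) (hji : j ≠ i) :
    ∃ (m' : ℕ) (ι' : Fin m' → Fin n),
      IsMemberMarginal S T τ ι' ∧ j ∈ Set.range ι' ∧ i ∉ Set.range ι' := by
  by_cases hi : i ∈ Set.range ι
  · obtain ⟨l, rfl⟩ := hi
    obtain ⟨l', rfl⟩ := hj
    cases m with
    | zero => exact l.elim0
    | succ m =>
      obtain ⟨z, rfl⟩ := Fin.exists_succAbove_eq (ne_of_apply_ne ι hji)
      refine ⟨m, ι ∘ l.succAbove, ⟨hι.1.comp (Fin.strictMono_succAbove l), ?_⟩,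
        Set.mem_range_self z, ?_⟩
      · rw [← red_red]
        exact hsub.1 m (T ∘ ι) _ l hι.2
      · rintro ⟨y, hy⟩
        exact Fin.succAbove_ne l y (hι.1.injective hy)
  · exact ⟨m, ι, hι, hj, hi⟩

theorem perfectJoins_face_mem (hsub : IsSubcomplex A Val S) {n : ℕ} {T : Fin (n + 1) → A}
    {τ : Measure (∀ k, Val (T k))} (i : Fin (n + 1))
    (hτ : (⟨n + 1, T, τ⟩ : DT A Val) ∈ PerfectJoins A Val S) :
    (⟨n, T ∘ i.succAbove, face A Val T i τ⟩ : DT A Val) ∈ PerfectJoins A Val S := by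
  refine mem_perfectJoins_iff.mpr fun k => ?_
  obtain ⟨m, ι, hι, hk⟩ := mem_perfectJoins_iff.mp hτ (i.succAbove k)
  obtain ⟨m', ι', hι', hk', hi⟩ := hι.exists_notMem_range hsub hk (Fin.succAbove_ne i k)
  obtain ⟨g, hg, rfl⟩ := (Fin.strictMono_succAbove i).exists_comp_eq_of_range_subset hι'.1
    (by rwa [Fin.range_succAbove, Set.subset_compl_singleton_iff])
  obtain ⟨l, hl⟩ := hk'
  exact ⟨m', g, hι'.of_comp hg, l, Fin.succAbove_right_injective hl⟩

theorem perfectJoins_degen_mem {n : ℕ} {T : Fin n → A} {τ : Measure (∀ k, Val (T k))}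
    (i : Fin n) (hτ : (⟨n, T, τ⟩ : DT A Val) ∈ PerfectJoins A Val S) :
    (⟨n + 1, T ∘ i.predAbove, degen A Val T i τ⟩ : DT A Val) ∈ PerfectJoins A Val S := by
  refine mem_perfectJoins_iff.mpr fun k => ?_
  obtain ⟨m, ι, hι, l, hl⟩ := mem_perfectJoins_iff.mp hτ (i.predAbove k)
  obtain ⟨σ, hσ, hσi, hσk⟩ := i.exists_strictMono_leftInverse_predAbove k
  have hfg : i.predAbove ∘ (σ ∘ ι) = ι := by rw [← Function.comp_assoc, hσi.comp_eq_id]; rfl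
  exact ⟨m, σ ∘ ι, (hfg ▸ hι).of_comp (hσ.comp hι.1), l,
    by simp only [Function.comp_apply, hl, hσk]⟩

theorem exists_isMemberMarginal_of_red_mem_perfectJoins {n q : ℕ} {T : Fin n → A}
    {τ : Measure (∀ k, Val (T k))} {f : Fin q → Fin n} (hf : StrictMono f)
    (hτ : (⟨q, T ∘ f, red A Val T f τ⟩ : DT A Val) ∈ PerfectJoins A Val S) (j : Fin q) :
    ∃ (m : ℕ) (ι : Fin m → Fin n), IsMemberMarginal S T τ ι ∧ f j ∈ Set.range ι := by
  obtain ⟨m, g, hg, l, hl⟩ := mem_perfectJoins_iff.mp hτ j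
  exact ⟨m, f ∘ g, hg.comp hf, l, congrArg f hl⟩

theorem strongJoinCondition_perfectJoins : StrongJoinCondition A Val (PerfectJoins A Val S) := by
  intro _ _ _ _ _ _ _ _ M T τ01 τ02 h01 h02 _ τ h1 h2
  subst h1 h2
  refine mem_perfectJoins_iff.mpr fun i => ?_
  rcases M.cover.symm ▸ Set.mem_univ i with ⟨j, rfl⟩ | ⟨j, rfl⟩
  · exact exists_isMemberMarginal_of_red_mem_perfectJoins M.mono01 h01 j
  · exact exists_isMemberMarginal_of_red_mem_perfectJoins M.mono02 h02 j

end PerfectJoins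

theorem perfect_joins_fibrant
    (S : Set (DT A Val)) (hsub : IsSubcomplex A Val S) :
    IsSubcomplex A Val (PerfectJoins A Val S) ∧
    StrongJoinCondition A Val (PerfectJoins A Val S) :=
  ⟨⟨fun _ _ _ i hτ => perfectJoins_face_mem hsub i hτ,
    fun _ _ _ i hτ => perfectJoins_degen_mem i hτ⟩, strongJoinCondition_perfectJoins⟩
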